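/- Let (Ω, 𝓕, μ) be a probability space, X, Y : Ω → ℝ and Z : Ω → ℝ^d Borel measurable random variables, and let F_{X|Z}(t|z) = (condDistrib X Z μ) z ((−∞, t]) and F_{Y|Z}(t|z) = (condDistrib Y Z μ) z ((−∞, t]) be the conditional distribution functions of X given Z = z and of Y given Z = z. Assume that for (law of Z)-almost every z the conditional laws of X and of Y given Z = z are atomless. Define the nonparametric residuals U₁(ω) = F_{X|Z}(X(ω)|Z(ω)) and U₂(ω) = F_{Y|Z}(Y(ω)|Z(ω)). If X and Y are conditionally independent given Z, then U₁ and U₂ are independent. -/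

import Mathlib

/-!
Conditional independence says that the joint law of `(Z, X, Y)` is
`law(Z) ⊗ (κ_X(z) × κ_Y(z))`. The residual pair is the image of this law under
`(z, x, y) ↦ (F_{X|Z}(x|z), F_{Y|Z}(y|z))`, and for every `z` with atomless conditional laws
the probability integral transform sends `κ_X(z) × κ_Y(z)` to the product of two uniform laws
on `[0, 1]`, whatever `z` is. So `(U₁, U₂)` has the product law `Unif[0,1] × Unif[0,1]`.
-/

open MeasureTheory ProbabilityTheory Set Filter Topology

namespace ProbabilityTheory

instance : IsProbabilityMeasure (volume.restrict (Icc (0 : ℝ) 1)) := ⟨by simp⟩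

section NullSingleton

variable (ν : Measure ℝ) [IsProbabilityMeasure ν] [NullSingletonClass ν]

lemma continuous_cdf : Continuous (cdf ν) := by
  refine continuous_iff_continuousAt.2 fun x ↦
    continuousAt_iff_continuous_left_right.2 ⟨?_, (cdf ν).right_continuous x⟩
  rw [← continuousWithinAt_Iio_iff_Iic, (monotone_cdf ν).continuousWithinAt_Iio_iff_leftLim_eq]
  have h := (cdf ν).measure_singleton x
  rw [measure_cdf, measure_singleton, eq_comm, ENNReal.ofReal_eq_zero, sub_nonpos] at h
  exact le_antisymm ((monotone_cdf ν).leftLim_le le_rfl) h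

lemma measure_setOf_cdf_le {a : ℝ} (ha₀ : 0 ≤ a) (ha₁ : a < 1) :
    ν {x | cdf ν x ≤ a} = ENNReal.ofReal a := by
  set S := {x | cdf ν x ≤ a}
  rcases S.eq_empty_or_nonempty with hS | hS
  · obtain rfl : a = 0 := by
      refine le_antisymm (not_lt.1 fun ha ↦ ?_) ha₀
      obtain ⟨x, hx⟩ := ((tendsto_cdf_atBot ν).eventually (eventually_lt_nhds ha)).exists
      exact hS.subset (show x ∈ S from hx.le)
    simp [hS]
  have hbdd : BddAbove S := by
    obtain ⟨y, hy⟩ :=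
      ((tendsto_cdf_atTop ν).eventually (eventually_gt_nhds ha₁)).exists_forall_of_atTop
    exact ⟨y, fun x hx ↦ not_lt.1 fun hyx ↦ (hy x hyx.le).not_ge hx⟩
  have hc : sSup S ∈ S := (isClosed_le (continuous_cdf ν) continuous_const).csSup_mem hS hbdd
  have hSc : S = Iic (sSup S) :=
    Subset.antisymm (fun x hx ↦ le_csSup hbdd hx) fun x hx ↦ (monotone_cdf ν hx).trans hc
  -- to the right of `sSup S` the cdf exceeds `a`, so by continuity it is `a` at `sSup S`
  have hca : cdf ν (sSup S) = a := by
    refine le_antisymm hc <| ge_of_tendsto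
      ((continuous_cdf ν).continuousWithinAt (s := Ioi (sSup S)))
      (eventually_nhdsWithin_of_forall fun x (hx : sSup S < x) ↦ ?_)
    exact (not_le.1 fun h ↦ hx.not_ge (le_csSup hbdd h)).le
  rw [hSc, ← ofReal_cdf, hca]

lemma map_cdf_eq_uniform : ν.map (cdf ν) = volume.restrict (Icc 0 1) := by
  refine Measure.ext_of_Iic _ _ fun a ↦ ?_
  rw [Measure.map_apply (continuous_cdf ν).measurable measurableSet_Iic,
    Measure.restrict_apply measurableSet_Iic]
  rcases lt_or_ge a 0 with ha | ha₀
  · have h : cdf ν ⁻¹' Iic a = ∅ :=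
      eq_empty_of_forall_notMem fun x hx ↦ (cdf_nonneg ν x).not_gt (lt_of_le_of_lt hx ha)
    have h' : Iic a ∩ Icc (0 : ℝ) 1 = ∅ :=
      eq_empty_of_forall_notMem fun x hx ↦ hx.2.1.not_gt (lt_of_le_of_lt hx.1 ha)
    simp [h, h']
  rcases lt_or_ge a 1 with ha₁ | ha₁
  · have h : Iic a ∩ Icc (0 : ℝ) 1 = Icc 0 a := by
      ext
      simp only [mem_inter_iff, mem_Iic, mem_Icc]
      grind
    rw [h, Real.volume_Icc, sub_zero]
    exact measure_setOf_cdf_le ν ha₀ ha₁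
  · have h : cdf ν ⁻¹' Iic a = univ :=
      eq_univ_of_forall fun x ↦ (cdf_le_one ν x).trans ha₁
    rw [h, inter_eq_right.2 fun x hx ↦ hx.2.trans ha₁]
    simp

end NullSingleton

lemma measurable_cdf_kernel {α β : Type*} [MeasurableSpace α] [MeasurableSpace β]
    (κ : Kernel β ℝ) [IsMarkovKernel κ] {f : α → β} {g : α → ℝ} (hf : Measurable f)
    (hg : Measurable g) : Measurable fun a ↦ cdf (κ (f a)) (g a) := by
  simp_rw [cdf_eq_real, measureReal_def]
  have h := Kernel.measurable_kernel_prodMk_left (κ := κ.comap Prod.fst measurable_fst)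
    (measurableSet_le measurable_snd measurable_fst.snd)
  exact (h.comp (hf.prodMk hg)).ennreal_toReal

lemma indepFun_of_map_prodMk_eq_prod {Ω β γ : Type*} [MeasurableSpace Ω] [MeasurableSpace β]
    [MeasurableSpace γ] {μ : Measure Ω} [IsFiniteMeasure μ] {U : Ω → β} {V : Ω → γ}
    (hU : Measurable U) (hV : Measurable V) {ν₁ : Measure β} {ν₂ : Measure γ}
    [IsProbabilityMeasure ν₁] [IsProbabilityMeasure ν₂]
    (h : μ.map (fun ω ↦ (U ω, V ω)) = ν₁.prod ν₂) :
    IndepFun U V μ := by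
  have h₁ : μ.map U = ν₁ := by
    rw [← Measure.fst_map_prodMk hV, h, Measure.fst_prod]
  have h₂ : μ.map V = ν₂ := by
    rw [← Measure.snd_map_prodMk hU, h, Measure.snd_prod]
  rw [indepFun_iff_map_prod_eq_prod_map_map hU.aemeasurable hV.aemeasurable, h, h₁, h₂]

lemma map_compProd_eq_of_ae_map_eq {α β γ : Type*} [MeasurableSpace α] [MeasurableSpace β]
    [MeasurableSpace γ] (μ : Measure α) [IsProbabilityMeasure μ] (κ : Kernel α β)
    [IsSFiniteKernel κ] {f : α × β → γ} (hf : Measurable f) {ρ : Measure γ}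
    (h : ∀ᵐ a ∂μ, (κ a).map (fun b ↦ f (a, b)) = ρ) : (μ ⊗ₘ κ).map f = ρ := by
  ext s hs
  rw [Measure.map_apply hf hs, Measure.compProd_apply (hf hs)]
  have hslice : ∀ᵐ a ∂μ, κ a (Prod.mk a ⁻¹' (f ⁻¹' s)) = ρ s := by
    filter_upwards [h] with a ha
    rw [← ha]
    exact (Measure.map_apply (hf.comp measurable_prodMk_left) hs).symm
  rw [lintegral_congr_ae hslice, lintegral_const, measure_univ, mul_one]

lemma map_cdf_kernel_prod_eq_uniform {Ω β : Type*} [MeasurableSpace Ω] [MeasurableSpace β]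
    {μ : Measure Ω} [IsProbabilityMeasure μ] {Z : Ω → β} {X Y : Ω → ℝ} (hZ : Measurable Z)
    (hX : Measurable X) (hY : Measurable Y) (κ η : Kernel β ℝ) [IsMarkovKernel κ]
    [IsMarkovKernel η] (hjoint : μ.map (fun ω ↦ (Z ω, X ω, Y ω)) = μ.map Z ⊗ₘ (κ ×ₖ η))
    (hκ : ∀ᵐ z ∂μ.map Z, NullSingletonClass (κ z))
    (hη : ∀ᵐ z ∂μ.map Z, NullSingletonClass (η z)) :
    μ.map (fun ω ↦ (cdf (κ (Z ω)) (X ω), cdf (η (Z ω)) (Y ω))) =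
      (volume.restrict (Icc 0 1)).prod (volume.restrict (Icc 0 1)) := by
  have hΦ : Measurable fun p : β × ℝ × ℝ ↦ (cdf (κ p.1) p.2.1, cdf (η p.1) p.2.2) :=
    (measurable_cdf_kernel κ measurable_fst measurable_snd.fst).prodMk
      (measurable_cdf_kernel η measurable_fst measurable_snd.snd)
  have : IsProbabilityMeasure (μ.map Z) := Measure.isProbabilityMeasure_map hZ.aemeasurable
  refine (Measure.map_map hΦ (hZ.prodMk (hX.prodMk hY))).symm.trans ?_
  rw [hjoint]
  refine map_compProd_eq_of_ae_map_eq _ _ hΦ ?_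
  filter_upwards [hκ, hη] with z _ _
  change Measure.map (Prod.map (cdf (κ z)) (cdf (η z))) ((κ ×ₖ η) z) = _
  rw [Kernel.prod_apply, ← Measure.map_prod_map _ _ (continuous_cdf _).measurable
    (continuous_cdf _).measurable, map_cdf_eq_uniform, map_cdf_eq_uniform]

end ProbabilityTheory

/-- if `X` and `Y` are conditionally independent given `Z` (i.e. given the
σ-algebra generated by `Z`), and the conditional laws of `X` and of `Y` given `Z = z`
are atomless for `(μ.map Z)`-a.e. `z`, then the nonparametric residuals
`U₁ = F_{X|Z}(X|Z)` and `U₂ = F_{Y|Z}(Y|Z)` are independent. -/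
theorem residuals_indep_of_condIndep {Ω : Type*} [MeasurableSpace Ω]
    [StandardBorelSpace Ω] [Nonempty Ω]
    (μ : Measure Ω) [IsProbabilityMeasure μ] {d : ℕ}
    (X Y : Ω → ℝ) (Z : Ω → Fin d → ℝ)
    (hX : Measurable X) (hY : Measurable Y) (hZ : Measurable Z)
    (hatomlessX : ∀ᵐ z ∂(μ.map Z), ∀ x : ℝ, (condDistrib X Z μ) z {x} = 0)
    (hatomlessY : ∀ᵐ z ∂(μ.map Z), ∀ y : ℝ, (condDistrib Y Z μ) z {y} = 0)
    (hCI : CondIndepFun (MeasurableSpace.comap Z inferInstance) hZ.comap_le X Y μ) :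
    IndepFun (fun ω => ((condDistrib X Z μ) (Z ω) (Set.Iic (X ω))).toReal)
      (fun ω => ((condDistrib Y Z μ) (Z ω) (Set.Iic (Y ω))).toReal) μ := by
  have hjoint : μ.map (fun ω ↦ (Z ω, X ω, Y ω)) =
      μ.map Z ⊗ₘ (condDistrib X Z μ ×ₖ condDistrib Y Z μ) := by
    rw [Measure.compProd_eq_comp_prod]
    exact (condIndepFun_iff_map_prod_eq_prod_condDistrib_prod_condDistrib hX hY hZ).1 hCI
  simp_rw [← measureReal_def, ← cdf_eq_real]
  exact indepFun_of_map_prodMk_eq_prod (measurable_cdf_kernel _ hZ hX)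
    (measurable_cdf_kernel _ hZ hY) (map_cdf_kernel_prod_eq_uniform hZ hX hY _ _ hjoint
      (hatomlessX.mono fun _ h ↦ ⟨h⟩) (hatomlessY.mono fun _ h ↦ ⟨h⟩))
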